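/- Let F be a monotone subadditive quality cost with integer exponent α ≥ 1, let Ĵ be a nonempty instance with 0 < OPT(Ĵ) < ∞, let 𝒥 be any instance, let OfflineAlg be γ_off-competitive, let λ ∈ (0,1] with λ·γ_off ≤ 1, and set η₂ = OPT(Ĵ \ 𝒥)/OPT(Ĵ). If OFF(𝒥) ≤ λ·OFF(Ĵ), then η₂ ≥ (1 − (λ·γ_off)^{1/α})^α. -/

import Mathlib

open MeasureTheory Finset
open scoped ENNReal BigOperators Classical

/-- A job: identifier, release time, processing time, weight. -/
structure Job where
  id : ℕ
  r : ℝ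
  p : ℝ
  v : ℝ

noncomputable instance : DecidableEq Job := Classical.decEq _

/-- An instance is valid when release times are nonnegative and processing
times and weights are positive. -/
def ValidInstance (J : Finset Job) : Prop :=
  ∀ j ∈ J, 0 ≤ j.r ∧ 0 < j.p ∧ 0 < j.v

/-- A schedule: speed functions for jobs. -/
abbrev Sched := Job → ℝ → ℝ

/-- `S` is a feasible schedule for the instance `J`. -/
def Feasible (J : Finset Job) (S : Sched) : Prop :=
  ∀ j ∈ J, Measurable (S j) ∧ (∀ t, 0 ≤ S j t) ∧ (∀ t, t < j.r → S j t = 0) ∧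
    (∫ t in Set.Ici j.r, S j t) = j.p

/-- Work profile of job `j` under schedule `S`: remaining work at time `t`. -/
noncomputable def work (S : Sched) (j : Job) (t : ℝ) : ℝ :=
  j.p - ∫ u in Set.Icc j.r t, S j u

/-- Energy consumption of schedule `S` on instance `J`, with exponent `α`. -/
noncomputable def energy (α : ℕ) (J : Finset Job) (S : Sched) : ℝ≥0∞ :=
  ∫⁻ t in Set.Ioi (0 : ℝ), ENNReal.ofReal ((∑ j ∈ J, S j t) ^ α)

/-- A quality cost function: depends only on the work profiles (and job
parameters), is subadditive, monotone in the work profiles, and monotone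
under job-set inclusion. -/
structure QualityCost where
  F : Sched → Finset Job → ℝ≥0∞
  profile_congr : ∀ S S' J, (∀ j ∈ J, ∀ t, work S j t = work S' j t) → F S J = F S' J
  subadd : ∀ S J₁ J₂, Disjoint J₁ J₂ → F S (J₁ ∪ J₂) ≤ F S J₁ + F S J₂
  mono_work : ∀ S S' J, (∀ j ∈ J, ∀ t, j.r ≤ t → work S j t ≤ work S' j t) → F S J ≤ F S' J
  mono_subset : ∀ S J' J, J' ⊆ J → F S J' ≤ F S J

/-- Total cost of a schedule: energy plus quality cost. -/
noncomputable def cost (Q : QualityCost) (α : ℕ) (S : Sched) (J : Finset Job) : ℝ≥0∞ :=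
  energy α J S + Q.F S J

/-- Optimal (offline) cost of an instance. -/
noncomputable def OPT (Q : QualityCost) (α : ℕ) (J : Finset Job) : ℝ≥0∞ :=
  ⨅ (S : Sched) (_ : Feasible J S), cost Q α S J

/-- Jobs of `J` released at or before time `t`. -/
noncomputable def restrictLE (J : Finset Job) (t : ℝ) : Finset Job :=
  J.filter fun j => j.r ≤ t

/-- Jobs of `J` released at or after time `t`. -/
noncomputable def restrictGE (J : Finset Job) (t : ℝ) : Finset Job :=
  J.filter fun j => t ≤ j.r

/-- `A` is a `γ`-competitive offline algorithm: on every instance it returns a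
feasible schedule whose cost is between the optimum and `γ` times the optimum. -/
def OfflineCompetitive (Q : QualityCost) (α : ℕ) (γ : ℝ≥0∞) (A : Finset Job → Sched) : Prop :=
  ∀ K : Finset Job, ValidInstance K →
    Feasible K (A K) ∧ OPT Q α K ≤ cost Q α (A K) K ∧ cost Q α (A K) K ≤ γ * OPT Q α K

/-- `A` is a `γ`-competitive online algorithm: on every instance it returns a
feasible schedule of cost at most `γ` times the optimum. -/
def OnlineCompetitive (Q : QualityCost) (α : ℕ) (γ : ℝ≥0∞) (A : Finset Job → Sched) : Prop :=
  ∀ K : Finset Job, ValidInstance K →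
    Feasible K (A K) ∧ cost Q α (A K) K ≤ γ * OPT Q α K

/-- Cost `OFF(K)` achieved by the offline algorithm `Off` on instance `K`. -/
noncomputable def OFFcost (Q : QualityCost) (α : ℕ) (Off : Finset Job → Sched)
    (K : Finset Job) : ℝ≥0∞ :=
  cost Q α (Off K) K

/-- `S` is the schedule output by the algorithm TPE with offline algorithm `Off`,
online algorithm `On`, prediction `Jhat`, true instance `J` and confidence `lam`:
either `OFF(𝒥_{≤t}) ≤ λ·OFF(Ĵ)` for all times `t ≥ 0` and TPE outputs `On(𝒥)`,
or TPE switches at the first time `t_λ` with `OFF(𝒥_{≤t_λ}) > λ·OFF(Ĵ)` and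
outputs the combination of `OfflineAlg(Ĵ_{≥t_λ})` (for the correctly predicted
jobs `𝒥 ∩ Ĵ_{≥t_λ}`) and `OnlineAlg(𝒥 \ Ĵ_{≥t_λ})` (for all other jobs). -/
def TPEOutput (Q : QualityCost) (α : ℕ) (Off On : Finset Job → Sched)
    (Jhat J : Finset Job) (lam : ℝ) (S : Sched) : Prop :=
  ((∀ t : ℝ, 0 ≤ t →
      OFFcost Q α Off (restrictLE J t) ≤ ENNReal.ofReal lam * OFFcost Q α Off Jhat) ∧
    S = On J) ∨
  (∃ tl : ℝ, 0 ≤ tl ∧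
    ENNReal.ofReal lam * OFFcost Q α Off Jhat < OFFcost Q α Off (restrictLE J tl) ∧
    (∀ t : ℝ, 0 ≤ t →
      ENNReal.ofReal lam * OFFcost Q α Off Jhat < OFFcost Q α Off (restrictLE J t) → tl ≤ t) ∧
    S = fun j t =>
      if j ∈ J ∩ restrictGE Jhat tl then Off (restrictGE Jhat tl) j t
      else On (J \ restrictGE Jhat tl) j t)

/-! The `1/α`-th power of the optimal cost is subadditive over job sets: glue optimal schedules
for `Ĵ \ 𝒥` and `𝒥` and use Minkowski's inequality on the energy part and subadditivity on the
quality part. Since `OPT(𝒥) ≤ OFF(𝒥) ≤ λ·OFF(Ĵ) ≤ λγ_off·OPT(Ĵ)`, this gives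
`OPT(Ĵ)^{1/α} ≤ OPT(Ĵ \ 𝒥)^{1/α} + (λγ_off)^{1/α}·OPT(Ĵ)^{1/α}`, which rearranges to the bound. -/

namespace ENNReal

theorem rpow_inv_add_rpow_inv_rpow_add_add_le {p : ℝ} (hp : 1 ≤ p) (e₁ e₂ q₁ q₂ : ℝ≥0∞) :
    (e₁ ^ p⁻¹ + e₂ ^ p⁻¹) ^ p + (q₁ + q₂) ≤ ((e₁ + q₁) ^ p⁻¹ + (e₂ + q₂) ^ p⁻¹) ^ p := by
  have hp₀ : p ≠ 0 := by positivity
  have hq : q₁ + q₂ ≤ (q₁ ^ p⁻¹ + q₂ ^ p⁻¹) ^ p := by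
    simpa only [rpow_inv_rpow hp₀] using add_rpow_le_rpow_add (q₁ ^ p⁻¹) (q₂ ^ p⁻¹) hp
  -- Minkowski in `ℓ^p` for the vectors `(e₁^{1/p}, q₁^{1/p})` and `(e₂^{1/p}, q₂^{1/p})`
  have hmink := Lp_add_le (Finset.univ : Finset (Fin 2))
    ![e₁ ^ p⁻¹, q₁ ^ p⁻¹] ![e₂ ^ p⁻¹, q₂ ^ p⁻¹] hp
  simp only [Fin.sum_univ_two, Matrix.cons_val_zero, Matrix.cons_val_one, one_div,
    rpow_inv_rpow hp₀] at hmink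
  calc (e₁ ^ p⁻¹ + e₂ ^ p⁻¹) ^ p + (q₁ + q₂)
      ≤ (e₁ ^ p⁻¹ + e₂ ^ p⁻¹) ^ p + (q₁ ^ p⁻¹ + q₂ ^ p⁻¹) ^ p := by gcongr
    _ ≤ _ := (rpow_inv_le_iff (by positivity)).1 hmink

theorem one_sub_rpow_le_div_of_rpow_inv_le {p : ℝ} (hp : 0 < p) {a b c : ℝ≥0∞}
    (ha₀ : a ≠ 0) (ha : a ≠ ⊤) (h : a ^ p⁻¹ ≤ b ^ p⁻¹ + (c * a) ^ p⁻¹) :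
    (1 - c ^ p⁻¹) ^ p ≤ b / a := by
  have hmul : (1 - c ^ p⁻¹) * a ^ p⁻¹ ≤ b ^ p⁻¹ := by
    rw [ENNReal.sub_mul fun _ _ => rpow_ne_top_of_nonneg (by positivity) ha, one_mul,
      ← mul_rpow_of_nonneg _ _ (by positivity)]
    exact tsub_le_iff_right.2 h
  rw [ENNReal.le_div_iff_mul_le (Or.inl ha₀) (Or.inl ha)]
  simpa only [mul_rpow_of_nonneg _ _ hp.le, rpow_inv_rpow hp.ne'] using
    rpow_le_rpow hmul hp.le

end ENNReal

theorem Feasible.mono {J K : Finset Job} {S : Sched} (hS : Feasible J S) (hKJ : K ⊆ J) :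
    Feasible K S :=
  fun j hj => hS j (hKJ hj)

theorem Feasible.piecewise {A B : Finset Job} {S₁ S₂ : Sched}
    (h₁ : Feasible A S₁) (h₂ : Feasible B S₂) : Feasible (A ∪ B) (A.piecewise S₁ S₂) := by
  intro j hj
  by_cases hjA : j ∈ A
  · rw [Finset.piecewise_eq_of_mem _ _ _ hjA]
    exact h₁ j hjA
  · rw [Finset.piecewise_eq_of_notMem _ _ _ hjA]
    exact h₂ j ((Finset.mem_union.1 hj).resolve_left hjA)

theorem sum_piecewise_union_le {A B : Finset Job} {S₁ S₂ : Sched} (h₂ : Feasible B S₂) (t : ℝ) :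
    ∑ j ∈ A ∪ B, A.piecewise S₁ S₂ j t ≤ ∑ j ∈ A, S₁ j t + ∑ j ∈ B, S₂ j t := by
  have hA : ∑ j ∈ A, A.piecewise S₁ S₂ j t = ∑ j ∈ A, S₁ j t :=
    Finset.sum_congr rfl fun j hj => by rw [Finset.piecewise_eq_of_mem _ _ _ hj]
  have hB : ∑ j ∈ B \ A, A.piecewise S₁ S₂ j t = ∑ j ∈ B \ A, S₂ j t :=
    Finset.sum_congr rfl fun j hj => by
      rw [Finset.piecewise_eq_of_notMem _ _ _ (Finset.mem_sdiff.1 hj).2]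
  rw [← Finset.union_sdiff_self_eq_union, Finset.sum_union Finset.disjoint_sdiff, hA, hB]
  gcongr
  · exact fun j hj _ => (h₂ j hj).2.1 t
  · exact Finset.sdiff_subset

theorem energy_eq_lintegral_rpow (α : ℕ) {J : Finset Job} {S : Sched} (hS : Feasible J S) :
    energy α J S = ∫⁻ t in Set.Ioi (0 : ℝ), ENNReal.ofReal (∑ j ∈ J, S j t) ^ (α : ℝ) := by
  refine lintegral_congr fun t => ?_
  rw [ENNReal.rpow_natCast, ENNReal.ofReal_pow (Finset.sum_nonneg fun j hj => (hS j hj).2.1 t)]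

theorem energy_mono (α : ℕ) {J K : Finset Job} {S : Sched} (hS : Feasible J S) (hKJ : K ⊆ J) :
    energy α K S ≤ energy α J S := by
  refine lintegral_mono fun t => ENNReal.ofReal_le_ofReal (pow_le_pow_left₀ ?_ ?_ α)
  · exact Finset.sum_nonneg fun j hj => (hS j (hKJ hj)).2.1 t
  · exact Finset.sum_le_sum_of_subset_of_nonneg hKJ fun j hj _ => (hS j hj).2.1 t

theorem energy_piecewise_le {α : ℕ} (hα : 1 ≤ α) {A B : Finset Job} {S₁ S₂ : Sched}
    (h₁ : Feasible A S₁) (h₂ : Feasible B S₂) :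
    energy α (A ∪ B) (A.piecewise S₁ S₂) ≤
      (energy α A S₁ ^ (α : ℝ)⁻¹ + energy α B S₂ ^ (α : ℝ)⁻¹) ^ (α : ℝ) := by
  have hα' : (1 : ℝ) ≤ α := by exact_mod_cast hα
  set F : ℝ → ℝ≥0∞ := fun t => ENNReal.ofReal (∑ j ∈ A, S₁ j t)
  set G : ℝ → ℝ≥0∞ := fun t => ENNReal.ofReal (∑ j ∈ B, S₂ j t)
  have hF : Measurable F := (Finset.measurable_sum _ fun j hj => (h₁ j hj).1).ennreal_ofReal
  have hG : Measurable G := (Finset.measurable_sum _ fun j hj => (h₂ j hj).1).ennreal_ofReal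
  have hpointwise : energy α (A ∪ B) (A.piecewise S₁ S₂) ≤
      ∫⁻ t in Set.Ioi (0 : ℝ), (F + G) t ^ (α : ℝ) := by
    rw [energy_eq_lintegral_rpow α (h₁.piecewise h₂)]
    refine lintegral_mono fun t => ?_
    gcongr
    rw [Pi.add_apply, ← ENNReal.ofReal_add (Finset.sum_nonneg fun j hj => (h₁ j hj).2.1 t)
      (Finset.sum_nonneg fun j hj => (h₂ j hj).2.1 t)]
    exact ENNReal.ofReal_le_ofReal (sum_piecewise_union_le h₂ t)
  have hmink := ENNReal.lintegral_Lp_add_le (μ := volume.restrict (Set.Ioi (0 : ℝ)))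
    hF.aemeasurable hG.aemeasurable hα'
  rw [one_div, ENNReal.rpow_inv_le_iff (by positivity)] at hmink
  rw [energy_eq_lintegral_rpow α h₁, energy_eq_lintegral_rpow α h₂]
  exact hpointwise.trans hmink

namespace QualityCost

theorem F_piecewise_le (Q : QualityCost) (A B : Finset Job) (S₁ S₂ : Sched) :
    Q.F (A.piecewise S₁ S₂) (A ∪ B) ≤ Q.F S₁ A + Q.F S₂ B := by
  have hA : Q.F (A.piecewise S₁ S₂) A = Q.F S₁ A :=
    Q.profile_congr _ _ _ fun j hj t => by simp only [work, Finset.piecewise_eq_of_mem _ _ _ hj]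
  have hB : Q.F (A.piecewise S₁ S₂) (B \ A) = Q.F S₂ (B \ A) :=
    Q.profile_congr _ _ _ fun j hj t => by
      simp only [work, Finset.piecewise_eq_of_notMem _ _ _ (Finset.mem_sdiff.1 hj).2]
  calc Q.F (A.piecewise S₁ S₂) (A ∪ B)
      = Q.F (A.piecewise S₁ S₂) (A ∪ B \ A) := by rw [Finset.union_sdiff_self_eq_union]
    _ ≤ Q.F S₁ A + Q.F S₂ (B \ A) := hA ▸ hB ▸ Q.subadd _ _ _ Finset.disjoint_sdiff
    _ ≤ Q.F S₁ A + Q.F S₂ B := by gcongr; exact Q.mono_subset _ _ _ Finset.sdiff_subset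

end QualityCost

section Cost

variable (Q : QualityCost) {α : ℕ}

theorem cost_mono {J K : Finset Job} {S : Sched} (hS : Feasible J S) (hKJ : K ⊆ J) :
    cost Q α S K ≤ cost Q α S J :=
  add_le_add (energy_mono α hS hKJ) (Q.mono_subset S K J hKJ)

theorem cost_piecewise_le (hα : 1 ≤ α) {A B : Finset Job} {S₁ S₂ : Sched}
    (h₁ : Feasible A S₁) (h₂ : Feasible B S₂) :
    cost Q α (A.piecewise S₁ S₂) (A ∪ B) ≤
      (cost Q α S₁ A ^ (α : ℝ)⁻¹ + cost Q α S₂ B ^ (α : ℝ)⁻¹) ^ (α : ℝ) :=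
  (add_le_add (energy_piecewise_le hα h₁ h₂) (Q.F_piecewise_le A B S₁ S₂)).trans
    (ENNReal.rpow_inv_add_rpow_inv_rpow_add_add_le (by exact_mod_cast hα) _ _ _ _)

theorem OPT_le_cost {J : Finset Job} {S : Sched} (hS : Feasible J S) :
    OPT Q α J ≤ cost Q α S J :=
  iInf₂_le S hS

theorem OPT_mono {J K : Finset Job} (hKJ : K ⊆ J) : OPT Q α K ≤ OPT Q α J :=
  le_iInf₂ fun _ hS => (OPT_le_cost Q (hS.mono hKJ)).trans (cost_mono Q hS hKJ)

theorem OPT_rpow {p : ℝ} (hp : 0 < p) (J : Finset Job) :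
    OPT Q α J ^ p = ⨅ (S : Sched) (_ : Feasible J S), cost Q α S J ^ p :=
  ((ENNReal.orderIsoRpow p hp).map_iInf _).trans
    (iInf_congr fun _ => (ENNReal.orderIsoRpow p hp).map_iInf _)

theorem OPT_union_rpow_inv_le (hα : 1 ≤ α) (A B : Finset Job) :
    OPT Q α (A ∪ B) ^ (α : ℝ)⁻¹ ≤ OPT Q α A ^ (α : ℝ)⁻¹ + OPT Q α B ^ (α : ℝ)⁻¹ := by
  have hα' : (0 : ℝ) < α := by exact_mod_cast hα
  rw [OPT_rpow Q (inv_pos.2 hα') A, OPT_rpow Q (inv_pos.2 hα') B]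
  simp only [ENNReal.iInf_add, ENNReal.add_iInf]
  refine le_iInf₂ fun S₂ h₂ => le_iInf₂ fun S₁ h₁ => ?_
  exact (ENNReal.rpow_inv_le_iff hα').2
    ((OPT_le_cost Q (h₁.piecewise h₂)).trans (cost_piecewise_le Q hα h₁ h₂))

end Cost

theorem eta2_lower_bound_general (Q : QualityCost) (α : ℕ) (hα : 1 ≤ α)
    (γoff : ℝ≥0∞) (Off : Finset Job → Sched) (hOff : OfflineCompetitive Q α γoff Off)
    (Jhat J : Finset Job) (hJhatV : ValidInstance Jhat) (hJV : ValidInstance J)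
    (hpos : 0 < OPT Q α Jhat) (hfin : OPT Q α Jhat < ⊤)
    (lam : ℝ)
    (η₂ : ℝ≥0∞) (hη₂ : η₂ = OPT Q α (Jhat \ J) / OPT Q α Jhat)
    (hswitch : OFFcost Q α Off J ≤ ENNReal.ofReal lam * OFFcost Q α Off Jhat) :
    (1 - (ENNReal.ofReal lam * γoff) ^ ((α : ℝ)⁻¹)) ^ (α : ℝ) ≤ η₂ := by
  have hOPT : OPT Q α J ≤ ENNReal.ofReal lam * γoff * OPT Q α Jhat :=
    calc OPT Q α J ≤ OFFcost Q α Off J := (hOff J hJV).2.1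
      _ ≤ ENNReal.ofReal lam * OFFcost Q α Off Jhat := hswitch
      _ ≤ ENNReal.ofReal lam * (γoff * OPT Q α Jhat) := by gcongr; exact (hOff Jhat hJhatV).2.2
      _ = ENNReal.ofReal lam * γoff * OPT Q α Jhat := (mul_assoc _ _ _).symm
  have htriangle : OPT Q α Jhat ^ (α : ℝ)⁻¹ ≤
      OPT Q α (Jhat \ J) ^ (α : ℝ)⁻¹ + (ENNReal.ofReal lam * γoff * OPT Q α Jhat) ^ (α : ℝ)⁻¹ :=
    calc OPT Q α Jhat ^ (α : ℝ)⁻¹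
        ≤ OPT Q α (Jhat \ J ∪ J) ^ (α : ℝ)⁻¹ := by
          gcongr; exact OPT_mono Q le_sdiff_sup
      _ ≤ _ := (OPT_union_rpow_inv_le Q hα _ _).trans (by gcongr)
  rw [hη₂]
  exact ENNReal.one_sub_rpow_le_div_of_rpow_inv_le (by exact_mod_cast hα) hpos.ne' hfin.ne
    htriangle

/-- **Corollary 3.3 (second part).** If `OfflineAlg` is `γ_off`-competitive,
`λ·γ_off ≤ 1` and `OFF(𝒥) ≤ λ·OFF(Ĵ)`, then
`η₂ = OPT(Ĵ \ 𝒥)/OPT(Ĵ) ≥ (1 − (λγ_off)^{1/α})^α`. -/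
theorem eta2_lower_bound (Q : QualityCost) (α : ℕ) (hα : 1 ≤ α)
    (γoff : ℝ≥0∞) (Off : Finset Job → Sched) (hOff : OfflineCompetitive Q α γoff Off)
    (Jhat J : Finset Job) (hJhatV : ValidInstance Jhat) (hJV : ValidInstance J)
    (hne : Jhat.Nonempty) (hpos : 0 < OPT Q α Jhat) (hfin : OPT Q α Jhat < ⊤)
    (lam : ℝ) (hlam0 : 0 < lam) (hlam1 : lam ≤ 1)
    (hprod : ENNReal.ofReal lam * γoff ≤ 1)
    (η₂ : ℝ≥0∞) (hη₂ : η₂ = OPT Q α (Jhat \ J) / OPT Q α Jhat)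
    (hswitch : OFFcost Q α Off J ≤ ENNReal.ofReal lam * OFFcost Q α Off Jhat) :
    (1 - (ENNReal.ofReal lam * γoff) ^ ((α : ℝ)⁻¹)) ^ (α : ℝ) ≤ η₂ :=
  eta2_lower_bound_general Q α hα γoff Off hOff Jhat J hJhatV hJV hpos hfin lam η₂ hη₂ hswitch
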